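/- arXiv:2402.16469 — 12 statements merged into one kernel-verified Lean document; each statement's English description precedes it below -/
import Mathlib

section
/- Let x = x₁ b₁ a^{k₁} be a string of length m, where x₁ ∈ Σ*, a, b₁ ∈ Σ with b₁ ≠ a, and k₁ ≥ 1 is an integer. Let ℓ₁ = |x₁ b₁| and r₁ = m - 2. Then for every position i with ℓ₁ ≤ i ≤ r₁, suff[i] = i - ℓ₁ + 1. -/
/-!
With `L = i - ℓ₁ + 1`, the prefix `x[0..i]` is `x₁ b₁ a^L`, and since `i ≤ m - 2` the string `x`
ends in `a^(L+1)`. So the two share the suffix `a^L`, but their suffixes of length `L + 1` differ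
in the first letter (`b₁` against `a`).
-/

/-- `suffT x i` is the length of the longest common suffix of `x` and `x[0..i]`,
i.e. the largest `k` with `0 ≤ k ≤ i+1` such that `x[i-k+1..i] = x[m-k..m-1]`. -/
def suffT {α : Type*} [DecidableEq α] (x : List α) (i : ℕ) : ℕ :=
  Nat.findGreatest
    (fun k => (x.take (i + 1)).drop (i + 1 - k) = x.drop (x.length - k)) (i + 1)

/-- `Cond-suf(i,d)`: either `0 < d ≤ i+1` and `x[i-d+1..m-d-1]` is a suffix of `x`,
or `i+1 < d` and `x[0..m-d-1]` is a suffix of `x`. -/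
def CondSuf {α : Type*} (x : List α) (i d : ℕ) : Prop :=
  (0 < d ∧ d ≤ i + 1 ∧ (x.drop (i + 1 - d)).take (x.length - 1 - i) <:+ x) ∨
  (i + 1 < d ∧ x.take (x.length - d) <:+ x)

/-- `Cond-occ(i,d)`: either `0 < d ≤ i` and `x[i-d] ≠ x[i]`, or `i < d`. -/
def CondOcc {α : Type*} (x : List α) (i d : ℕ) : Prop :=
  (0 < d ∧ d ≤ i ∧ x[i - d]? ≠ x[i]?) ∨ i < d

/-- `goodSuff x i = min { d | Cond-suf(i,d) and Cond-occ(i,d) }`. -/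
noncomputable def goodSuff {α : Type*} (x : List α) (i : ℕ) : ℕ :=
  sInf {d | CondSuf x i d ∧ CondOcc x i d}

namespace List

variable {α : Type*}

theorem rtake_eq_rtake_of_le {l l' : List α} {j k : ℕ} (hjk : j ≤ k)
    (h : l.rtake k = l'.rtake k) : l.rtake j = l'.rtake j := by
  rw [rtake_eq_reverse_take_reverse, rtake_eq_reverse_take_reverse, reverse_inj] at h ⊢
  rw [← min_eq_left hjk, ← take_take, h, take_take]

theorem rtake_append_of_le_length (l : List α) {l' : List α} {j : ℕ} (hj : j ≤ l'.length) :
    (l ++ l').rtake j = l'.rtake j := by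
  rw [rtake, rtake, drop_append, drop_eq_nil_of_le (by simp; omega), nil_append, length_append]
  congr 1
  omega

theorem rtake_replicate (a : α) {j k : ℕ} (hjk : j ≤ k) :
    (replicate k a).rtake j = replicate j a := by
  rw [rtake, length_replicate, drop_replicate, Nat.sub_sub_self hjk]

theorem rtake_append_replicate (l : List α) (a : α) {j k : ℕ} (hjk : j ≤ k) :
    (l ++ replicate k a).rtake j = replicate j a := by
  rw [rtake_append_of_le_length l (by simpa using hjk), rtake_replicate a hjk]

end List

section suffT

variable {α : Type*} [DecidableEq α]

theorem suffT_eq_findGreatest_rtake {x : List α} {i : ℕ} (hi : i < x.length) :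
    suffT x i = Nat.findGreatest (fun k => (x.take (i + 1)).rtake k = x.rtake k) (i + 1) := by
  rw [suffT]
  simp only [List.rtake, List.length_take, min_eq_left (show i + 1 ≤ x.length by omega)]

/-- The predicate defining `suffT` is downward closed, so it is pinned down by one length where
it holds and the next length where it fails. -/
theorem suffT_eq_of_rtake {x : List α} {i L : ℕ} (hi : i < x.length) (hL : L ≤ i + 1)
    (heq : (x.take (i + 1)).rtake L = x.rtake L)
    (hne : (x.take (i + 1)).rtake (L + 1) ≠ x.rtake (L + 1)) :
    suffT x i = L := by
  rw [suffT_eq_findGreatest_rtake hi, Nat.findGreatest_eq_iff]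
  exact ⟨hL, fun _ => heq, fun k hLk _ hk => hne (List.rtake_eq_rtake_of_le hLk hk)⟩

end suffT

theorem statement0_general {α : Type*} [DecidableEq α] (x₁ : List α) (a b₁ : α) (k₁ : ℕ)
    (hb₁ : b₁ ≠ a)
    (x : List α) (hx : x = x₁ ++ [b₁] ++ List.replicate k₁ a)
    (i : ℕ) (hℓ : x₁.length + 1 ≤ i) (hr : i ≤ x.length - 2) :
    suffT x i = i - (x₁.length + 1) + 1 := by
  set L := i - (x₁.length + 1) + 1
  have hlen : x.length = x₁.length + 1 + k₁ := by simp [hx]; omega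
  have hLk : L + 1 ≤ k₁ := by omega
  have hprefix : x.take (i + 1) = x₁ ++ [b₁] ++ List.replicate L a := by
    rw [hx, List.take_append, List.take_of_length_le (by simp; omega), List.take_replicate]
    congr 2
    simp only [List.length_append, List.length_singleton]
    omega
  apply suffT_eq_of_rtake (by omega) (by omega)
  · rw [hprefix, List.rtake_append_replicate _ _ le_rfl, hx,
      List.rtake_append_replicate _ _ (by omega)]
  · rw [hprefix, List.append_assoc, List.rtake_append_of_le_length _ (by simp), hx,
      List.rtake_append_replicate _ _ hLk]
    simp [List.rtake, List.replicate_succ, hb₁]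

/-- Let `x = x₁ b₁ a^{k₁}` of length `m` with `b₁ ≠ a` and `k₁ ≥ 1`.
Let `ℓ₁ = |x₁ b₁|` and `r₁ = m - 2`. Then for every position `i` with `ℓ₁ ≤ i ≤ r₁`,
`suff[i] = i - ℓ₁ + 1`. -/
theorem statement0 {α : Type*} [DecidableEq α] (x₁ : List α) (a b₁ : α) (k₁ : ℕ)
    (hb₁ : b₁ ≠ a) (hk₁ : 1 ≤ k₁)
    (x : List α) (hx : x = x₁ ++ [b₁] ++ List.replicate k₁ a)
    (i : ℕ) (hℓ : x₁.length + 1 ≤ i) (hr : i ≤ x.length - 2) :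
    suffT x i = i - (x₁.length + 1) + 1 :=
  statement0_general x₁ a b₁ k₁ hb₁ x hx i hℓ hr
end

section
/- Let x = x₁ b₁ a^{k₁} be a string of length m, where x₁ ∈ Σ*, a, b₁ ∈ Σ with b₁ ≠ a, and k₁ ≥ 1 is an integer. Let ℓ₁ = |x₁ b₁| and r₁ = m - 2. Then for every position i with ℓ₁ ≤ i ≤ r₁, good-suff[i] = i - ℓ₁ + 1. -/
/-- Let `x = x₁ b₁ a^{k₁}` of length `m` with `b₁ ≠ a` and `k₁ ≥ 1`.
Let `ℓ₁ = |x₁ b₁|` and `r₁ = m - 2`. Then for every position `i` with `ℓ₁ ≤ i ≤ r₁`,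
`good-suff[i] = i - ℓ₁ + 1`. -/
theorem statement1 {α : Type*} (x₁ : List α) (a b₁ : α) (k₁ : ℕ)
    (hb₁ : b₁ ≠ a) (hk₁ : 1 ≤ k₁)
    (x : List α) (hx : x = x₁ ++ [b₁] ++ List.replicate k₁ a)
    (i : ℕ) (hℓ : x₁.length + 1 ≤ i) (hr : i ≤ x.length - 2) :
    goodSuff x i = i - (x₁.length + 1) + 1 := by

  subst hx
  set x := x₁ ++ [b₁] ++ List.replicate k₁ a with hxdef
  have hm : x.length = x₁.length + 1 + k₁ := by simp [hxdef]; omega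
  rw [hm] at hr
  have hi' : i + 1 ≤ x₁.length + k₁ := by omega
  have hgen : ∀ j, x₁.length + 1 ≤ j → j < x₁.length + 1 + k₁ → x[j]? = some a := by
    intro j h1 h2
    rw [hxdef, List.getElem?_append_right (by simp; omega)]
    simp only [List.getElem?_replicate, List.length_append, List.length_cons,
      List.length_nil]
    rw [if_pos (by simp; omega)]
  have hxi : x[i]? = some a := hgen i hℓ (by omega)
  have hxb : x[x₁.length]? = some b₁ := by
    rw [hxdef, List.getElem?_append_left (by simp), List.getElem?_append_right (by simp)]
    simp
  set d := i - (x₁.length + 1) + 1 with hd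
  have hmem : CondSuf x i d ∧ CondOcc x i d := by
    constructor
    · left
      refine ⟨by omega, by omega, ?_⟩
      have h1 : i + 1 - d = x₁.length + 1 := by omega
      have h2 : x.drop (x₁.length + 1) = List.replicate k₁ a := by
        rw [hxdef, show x₁.length + 1 = (x₁ ++ [b₁]).length by simp, List.drop_left]
      rw [h1, h2, hm, List.take_replicate]
      set t := min (x₁.length + 1 + k₁ - 1 - i) k₁ with ht
      have htk : t ≤ k₁ := by omega
      refine List.IsSuffix.trans ?_ (List.suffix_append (x₁ ++ [b₁]) (List.replicate k₁ a))
      exact ⟨List.replicate (k₁ - t) a, by rw [← List.replicate_add]; congr 1; omega⟩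
    · left
      refine ⟨by omega, by omega, ?_⟩
      have : i - d = x₁.length := by omega
      rw [this, hxb, hxi]
      simp [hb₁]
  apply le_antisymm
  · exact Nat.sInf_le hmem
  · apply le_csInf ⟨d, hmem⟩
    rintro b ⟨hs, ho⟩
    by_contra hlt
    push_neg at hlt
    rcases ho with ⟨hb0, hbi, hne⟩ | hbi
    · have h1 : x₁.length + 1 ≤ i - b := by omega
      have hxib : x[i - b]? = some a := hgen _ h1 (by omega)
      rw [hxib, hxi] at hne
      exact hne rfl
    · omega
end

section
/- Let x = x₁ b₁ a^{k₁} be a string of length m, where x₁ ∈ Σ*, a, b₁ ∈ Σ with b₁ ≠ a, and k₁ ≥ 1 is an integer. Then good-suff[m-1] = k₁. -/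
/-- Let `x = x₁ b₁ a^{k₁}` of length `m` with `b₁ ≠ a` and `k₁ ≥ 1`.
Then `good-suff[m-1] = k₁`. -/
theorem statement2 {α : Type*} (x₁ : List α) (a b₁ : α) (k₁ : ℕ)
    (hb₁ : b₁ ≠ a) (hk₁ : 1 ≤ k₁)
    (x : List α) (hx : x = x₁ ++ [b₁] ++ List.replicate k₁ a) :
    goodSuff x (x.length - 1) = k₁ := by
  have hlen : x.length = x₁.length + 1 + k₁ := by simp [hx]; omega
  have ha : ∀ j, j < k₁ → x[x₁.length + 1 + j]? = some a := by
    intro j hj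
    rw [hx, List.append_assoc]
    rw [List.getElem?_append_right (by omega : x₁.length ≤ x₁.length + 1 + j),
      show x₁.length + 1 + j - x₁.length = j + 1 by omega, List.singleton_append,
      List.getElem?_cons_succ]
    simp [List.getElem?_replicate, hj]
  have hb : x[x₁.length]? = some b₁ := by
    rw [hx, List.append_assoc]
    rw [List.getElem?_append_right (le_refl _), Nat.sub_self, List.singleton_append,
      List.getElem?_cons_zero]
  have hia : x[x.length - 1]? = some a := by
    have := ha (k₁ - 1) (by omega)
    rwa [show x₁.length + 1 + (k₁ - 1) = x.length - 1 by omega] at this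
  have hmem : k₁ ∈ {d | CondSuf x (x.length - 1) d ∧ CondOcc x (x.length - 1) d} := by
    constructor
    · left
      refine ⟨hk₁, by omega, ?_⟩
      rw [Nat.sub_self]
      simp
    · left
      refine ⟨hk₁, by omega, ?_⟩
      rw [show x.length - 1 - k₁ = x₁.length by omega, hb, hia]
      simp [hb₁]
  unfold goodSuff
  refine le_antisymm (Nat.sInf_le hmem) (le_csInf ⟨k₁, hmem⟩ ?_)
  rintro d ⟨hsuf, hocc⟩
  by_contra hlt
  push_neg at hlt
  have hd : 0 < d := by
    rcases hsuf with ⟨h, _⟩ | ⟨h, _⟩ <;> omega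
  rcases hocc with ⟨_, hdle, hne⟩ | hgt
  · apply hne
    have := ha (k₁ - d - 1) (by omega)
    rw [show x.length - 1 - d = x₁.length + 1 + (k₁ - d - 1) by omega, this, hia]
  · omega
end

section
/- Let x = x₂ b₂ a^{k₂} x₃ b₁ a^{k₁} be a string of length m, where x₂, x₃ ∈ Σ*, a, b₁, b₂ ∈ Σ with b₁ ≠ a and b₂ ≠ a, and k₁, k₂ ≥ 1 are integers with k₂ < k₁. Let ℓ₂ = |x₂ b₂| and r₂ = |x₂ b₂ a^{k₂}| - 1. Then for every position i with ℓ₂ ≤ i ≤ r₂, suff[i] = i - ℓ₂ + 1. -/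
theorem suffT_eq_length_of_mismatch {α : Type*} [DecidableEq α] {u v s : List α} {i : ℕ}
    {b c : α} (hu : (v ++ c :: s).take (i + 1) = u ++ b :: s) (hbc : b ≠ c) :
    suffT (v ++ c :: s) i = s.length := by
  have hi : i < (v ++ c :: s).length := by
    by_contra! hle
    rw [List.take_of_length_le (by omega)] at hu
    exact hbc (List.cons.inj (List.append_inj' hu.symm rfl).2).1
  have hlen_u : u.length + s.length + 1 = i + 1 := by
    have h := congrArg List.length hu
    rw [List.length_take, min_eq_left (by omega)] at h
    simp only [List.length_append, List.length_cons] at h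
    omega
  have hlen_x : (v ++ c :: s).length = v.length + s.length + 1 := by
    simp only [List.length_append, List.length_cons]; omega
  rw [suffT, Nat.findGreatest_eq_iff, hlen_x]
  refine ⟨by omega, fun _ => ?_, fun k hk hki hP => ?_⟩
  · rw [hu, (by omega : i + 1 - s.length = u.length + 1),
      (by omega : v.length + s.length + 1 - s.length = v.length + 1)]
    simp
  · -- dropping a further `k - s.length - 1` letters from both sides of `hP` exposes `b :: s = c :: s`
    have h := congrArg (List.drop (k - s.length - 1)) hP
    rw [List.drop_drop, List.drop_drop, hu, (by omega : i + 1 - k + (k - s.length - 1) = u.length),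
      (by omega : v.length + s.length + 1 - k + (k - s.length - 1) = v.length)] at h
    simp only [List.drop_left] at h
    exact hbc (List.cons.inj h).1

theorem statement3_general {α : Type*} [DecidableEq α] (x₂ x₃ : List α) (a b₁ b₂ : α) (k₁ k₂ : ℕ)
    (hb₂ : b₂ ≠ a) (hkk : k₂ < k₁)
    (x : List α)
    (hx : x = x₂ ++ [b₂] ++ List.replicate k₂ a ++ x₃ ++ [b₁] ++ List.replicate k₁ a)
    (i : ℕ) (hℓ : x₂.length + 1 ≤ i) (hr : i ≤ x₂.length + 1 + k₂ - 1) :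
    suffT x i = i - (x₂.length + 1) + 1 := by
  obtain ⟨j, rfl⟩ := Nat.exists_eq_add_of_le hℓ
  have hsplit : List.replicate k₁ a =
      List.replicate (k₁ - (j + 1) - 1) a ++ a :: List.replicate (j + 1) a := by
    rw [← List.replicate_succ, ← List.replicate_add]
    congr 1
    omega
  rw [hx, hsplit, ← List.append_assoc]
  refine (suffT_eq_length_of_mismatch (u := x₂) ?_ hb₂).trans ?_
  · rw [(by omega : x₂.length + 1 + j + 1 = x₂.length + (j + 1 + 1))]
    simp only [List.append_assoc, List.cons_append, List.nil_append,
      List.take_length_add_append, List.take_succ_cons,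
      List.take_append_of_le_length
        (by simp only [List.length_replicate]; omega : j + 1 ≤ (List.replicate k₂ a).length),
      List.take_replicate, min_eq_left (by omega : j + 1 ≤ k₂)]
  · rw [List.length_replicate]
    omega

/-- Let `x = x₂ b₂ a^{k₂} x₃ b₁ a^{k₁}` with `b₁ ≠ a`, `b₂ ≠ a`,
`k₁, k₂ ≥ 1`, `k₂ < k₁`. Let `ℓ₂ = |x₂ b₂|` and `r₂ = |x₂ b₂ a^{k₂}| - 1`.
Then for every position `i` with `ℓ₂ ≤ i ≤ r₂`, `suff[i] = i - ℓ₂ + 1`. -/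
theorem statement3 {α : Type*} [DecidableEq α] (x₂ x₃ : List α) (a b₁ b₂ : α) (k₁ k₂ : ℕ)
    (hb₁ : b₁ ≠ a) (hb₂ : b₂ ≠ a) (hk₁ : 1 ≤ k₁) (hk₂ : 1 ≤ k₂) (hkk : k₂ < k₁)
    (x : List α)
    (hx : x = x₂ ++ [b₂] ++ List.replicate k₂ a ++ x₃ ++ [b₁] ++ List.replicate k₁ a)
    (i : ℕ) (hℓ : x₂.length + 1 ≤ i) (hr : i ≤ x₂.length + 1 + k₂ - 1) :
    suffT x i = i - (x₂.length + 1) + 1 :=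
  statement3_general x₂ x₃ a b₁ b₂ k₁ k₂ hb₂ hkk x hx i hℓ hr
end

section
/- Let x = x₂ b₂ a^{k₂} x₃ b₁ a^{k₁} be a string of length m, where x₂, x₃ ∈ Σ*, a, b₁, b₂ ∈ Σ with b₁ ≠ a and b₂ ≠ a, and k₁, k₂ ≥ 1 are integers with k₂ < k₁. Let ℓ₂ = |x₂ b₂| and r₂ = |x₂ b₂ a^{k₂}| - 1. Then for every position i with ℓ₂ ≤ i ≤ r₂, good-suff[m-1-suff[i]] < m-1-i. -/
/-!
Write `i = |x₂| + j` with `1 ≤ j ≤ k₂`. Then `x[0..i]` ends in `b₂ aʲ` while `x` ends in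
`b₁ a^{k₁}` with `j < k₁`, so `suff[i] = j`: one more letter would match `b₂` against `a`.
At position `m-1-j` the shift `k₁ - j` puts `b₁ ≠ a` under the `a` there and keeps `aʲ` a
suffix of `x`, so `good-suff[m-1-j] ≤ k₁ - j`, which is short of `m-1-i` by `k₂ + |x₃| + 1`.
-/

open List

section

variable {α : Type*} {a b : α} {x : List α} {j k : ℕ}

theorem replicate_suffix_replicate {n : ℕ} (h : k ≤ n) : replicate k a <:+ replicate n a :=
  suffix_replicate_iff.2 ⟨by simpa using h, by simp⟩

theorem drop_length_sub_eq_replicate {n : ℕ} (h : replicate n a <:+ x) (hk : k ≤ n) :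
    x.drop (x.length - k) = replicate k a := by
  simpa using (suffix_iff_eq_drop.1 ((replicate_suffix_replicate hk).trans h)).symm

theorem suffT_eq_of_isPrefix_of_isSuffix [DecidableEq α] {u : List α}
    (hp : u ++ b :: replicate j a <+: x) (hs : replicate (j + 1) a <:+ x) (hb : b ≠ a) :
    suffT x (u.length + j) = j := by
  have htake : x.take (u.length + j + 1) = u ++ b :: replicate j a := by
    rw [prefix_iff_eq_take.1 hp]; simp; omega
  have hlen := hp.length_le
  simp only [length_append, length_cons, length_replicate] at hlen
  unfold suffT
  rw [htake, Nat.findGreatest_eq_iff]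
  refine ⟨by omega, fun _ => ?_, fun n hjn hn hP => hb ?_⟩
  · rw [drop_length_sub_eq_replicate hs (Nat.le_succ j),
      show u.length + j + 1 - j = u.length + 1 by omega, drop_length_add_append, drop_one,
      tail_cons]
  · -- the common suffix of length `j + 1` would be both `b :: aʲ` and `a :: aʲ`
    replace hP := congrArg (drop (n - (j + 1))) hP
    rw [drop_drop, drop_drop, show u.length + j + 1 - n + (n - (j + 1)) = u.length by omega,
      show x.length - n + (n - (j + 1)) = x.length - (j + 1) by omega, drop_left,
      drop_length_sub_eq_replicate hs le_rfl, replicate_succ] at hP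
    exact (cons_eq_cons.1 hP).1

theorem goodSuff_length_sub_one_sub_le (h : b :: replicate k a <:+ x) (hb : b ≠ a)
    (hjk : j < k) : goodSuff x (x.length - 1 - j) ≤ k - j := by
  obtain ⟨v, rfl⟩ := h
  have hlen : (v ++ b :: replicate k a).length = v.length + 1 + k := by simp; omega
  refine Nat.sInf_le
    ⟨Or.inl ⟨by omega, by simp; omega, ?_⟩, Or.inl ⟨by omega, by simp; omega, ?_⟩⟩
  · rw [hlen, show v.length + 1 + k - 1 - (v.length + 1 + k - 1 - j) = j by omega,
      show v.length + 1 + k - 1 - j + 1 - (k - j) = v.length + 1 by omega, drop_length_add_append,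
      drop_one, tail_cons, take_replicate, min_eq_left hjk.le]
    exact (replicate_suffix_replicate hjk.le).trans ((suffix_cons _ _).trans (suffix_append _ _))
  · rw [hlen, show v.length + 1 + k - 1 - j - (k - j) = v.length by omega,
      show v.length + 1 + k - 1 - j = v.length + (k - j - 1 + 1) by omega,
      getElem?_append_right le_rfl, getElem?_append_right (by omega), Nat.sub_self,
      Nat.add_sub_cancel_left, getElem?_cons_zero, getElem?_cons_succ,
      getElem?_replicate_of_lt (by omega)]
    exact fun h => hb (Option.some_injective _ h)

end

theorem statement4_general {α : Type*} [DecidableEq α] (x₂ x₃ : List α) (a b₁ b₂ : α) (k₁ k₂ : ℕ)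
    (hb₁ : b₁ ≠ a) (hb₂ : b₂ ≠ a) (hkk : k₂ < k₁)
    (x : List α)
    (hx : x = x₂ ++ [b₂] ++ List.replicate k₂ a ++ x₃ ++ [b₁] ++ List.replicate k₁ a)
    (i : ℕ) (hℓ : x₂.length + 1 ≤ i) (hr : i ≤ x₂.length + 1 + k₂ - 1) :
    goodSuff x (x.length - 1 - suffT x i) < x.length - 1 - i := by
  obtain ⟨j, rfl⟩ : ∃ j, i = x₂.length + j := ⟨i - x₂.length, by omega⟩
  have hprefix : x₂ ++ b₂ :: replicate j a <+: x :=
    ⟨replicate (k₂ - j) a ++ x₃ ++ [b₁] ++ replicate k₁ a, by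
      rw [hx]; simp only [append_assoc, cons_append, nil_append]
      rw [← append_assoc, replicate_append_replicate, Nat.add_sub_cancel' (by omega)]⟩
  have hsuffix : b₁ :: replicate k₁ a <:+ x :=
    ⟨x₂ ++ [b₂] ++ replicate k₂ a ++ x₃, by simp [hx]⟩
  have hrun : replicate (j + 1) a <:+ x :=
    (replicate_suffix_replicate (by omega)).trans ((suffix_cons _ _).trans hsuffix)
  rw [suffT_eq_of_isPrefix_of_isSuffix hprefix hrun hb₂]
  calc goodSuff x (x.length - 1 - j) ≤ k₁ - j :=
        goodSuff_length_sub_one_sub_le hsuffix hb₁ (by omega)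
    _ < x.length - 1 - (x₂.length + j) := by subst hx; simp; omega

/-- Let `x = x₂ b₂ a^{k₂} x₃ b₁ a^{k₁}` with `b₁ ≠ a`, `b₂ ≠ a`,
`k₁, k₂ ≥ 1`, `k₂ < k₁`. Let `ℓ₂ = |x₂ b₂|` and `r₂ = |x₂ b₂ a^{k₂}| - 1`.
Then for every position `i` with `ℓ₂ ≤ i ≤ r₂`,
`good-suff[m-1-suff[i]] < m-1-i`. -/
theorem statement4 {α : Type*} [DecidableEq α] (x₂ x₃ : List α) (a b₁ b₂ : α) (k₁ k₂ : ℕ)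
    (hb₁ : b₁ ≠ a) (hb₂ : b₂ ≠ a) (hk₁ : 1 ≤ k₁) (hk₂ : 1 ≤ k₂) (hkk : k₂ < k₁)
    (x : List α)
    (hx : x = x₂ ++ [b₂] ++ List.replicate k₂ a ++ x₃ ++ [b₁] ++ List.replicate k₁ a)
    (i : ℕ) (hℓ : x₂.length + 1 ≤ i) (hr : i ≤ x₂.length + 1 + k₂ - 1) :
    goodSuff x (x.length - 1 - suffT x i) < x.length - 1 - i :=
  statement4_general x₂ x₃ a b₁ b₂ k₁ k₂ hb₁ hb₂ hkk x hx i hℓ hr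
end

section
/- Let x = x₄ b₄ a^{k₃} x₅ b₁ a^{k₁} be a string of length m, where x₄, x₅ ∈ Σ*, a, b₁, b₄ ∈ Σ with b₁ ≠ a and b₄ ≠ a, and k₁, k₃ ≥ 1 are integers with k₃ ≥ k₁. Let ℓ₃ = |x₄ b₄|, r₃ = |x₄ b₄ a^{k₃}| - 1 and e = ℓ₃ + k₁ - 1. Then for every position i with e < i ≤ r₃, suff[i] = k₁. -/
theorem List.getElem?_append_replicate_append {α : Type*} (u v : List α) (a : α) {n j : ℕ}
    (hj : u.length ≤ j) (hjn : j < u.length + n) :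
    (u ++ List.replicate n a ++ v)[j]? = some a := by
  rw [List.getElem?_append_left (by simp; omega), List.getElem?_append_right hj,
    List.getElem?_replicate, if_pos (by omega)]

theorem List.drop_take_eq_drop_iff_forall_getElem? {α : Type*} (x : List α) {i k : ℕ}
    (hk : k ≤ i + 1) (hi : i < x.length) :
    (x.take (i + 1)).drop (i + 1 - k) = x.drop (x.length - k) ↔
      ∀ j < k, x[i - j]? = x[x.length - 1 - j]? := by
  simp only [List.ext_getElem?_iff, List.getElem?_drop, List.getElem?_take]
  constructor
  · intro h j hj
    have := h (k - 1 - j)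
    rwa [if_pos (by omega), show i + 1 - k + (k - 1 - j) = i - j by omega,
      show x.length - k + (k - 1 - j) = x.length - 1 - j by omega] at this
  · intro h n
    by_cases hn : n < k
    · rw [if_pos (by omega), show i + 1 - k + n = i - (k - 1 - n) by omega,
        show x.length - k + n = x.length - 1 - (k - 1 - n) by omega]
      exact h _ (by omega)
    · rw [if_neg (by omega), List.getElem?_eq_none (by omega)]

theorem suffT_eq_of_mismatch {α : Type*} [DecidableEq α] {x : List α} {i k : ℕ}
    (hi : i < x.length) (hk : k ≤ i) (hmatch : ∀ j < k, x[i - j]? = x[x.length - 1 - j]?)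
    (hmismatch : x[i - k]? ≠ x[x.length - 1 - k]?) : suffT x i = k := by
  rw [suffT, Nat.findGreatest_eq_iff]
  refine ⟨by omega, fun _ => (x.drop_take_eq_drop_iff_forall_getElem? (by omega) hi).2 hmatch, ?_⟩
  intro k' hk' hk'i hsuffix
  exact hmismatch ((x.drop_take_eq_drop_iff_forall_getElem? hk'i hi).1 hsuffix k hk')

theorem statement5_general {α : Type*} [DecidableEq α] (x₄ x₅ : List α) (a b₁ b₄ : α) (k₁ k₃ : ℕ)
    (hb₁ : b₁ ≠ a)
    (x : List α)
    (hx : x = x₄ ++ [b₄] ++ List.replicate k₃ a ++ x₅ ++ [b₁] ++ List.replicate k₁ a)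
    (i : ℕ) (he : (x₄.length + 1) + k₁ - 1 < i) (hr : i ≤ (x₄.length + 1) + k₃ - 1) :
    suffT x i = k₁ := by
  have hlen : x.length = x₄.length + 1 + k₃ + x₅.length + 1 + k₁ := by
    simp [hx]; omega
  have hblock : ∀ j, x₄.length + 1 ≤ j → j < x₄.length + 1 + k₃ → x[j]? = some a := by
    intro j hj hjk
    rw [hx, show x₄ ++ [b₄] ++ List.replicate k₃ a ++ x₅ ++ [b₁] ++ List.replicate k₁ a =
      (x₄ ++ [b₄]) ++ List.replicate k₃ a ++ (x₅ ++ [b₁] ++ List.replicate k₁ a) by simp]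
    exact List.getElem?_append_replicate_append _ _ _ (by simpa using hj) (by simpa using hjk)
  have htail : ∀ j < k₁, x[x.length - 1 - j]? = some a := by
    intro j hj
    rw [hx, ← List.append_nil (_ ++ List.replicate k₁ a)]
    exact List.getElem?_append_replicate_append _ _ _ (by simp; omega) (by simp; omega)
  have hb : x[x.length - 1 - k₁]? = some b₁ := by
    rw [hx, show x₄ ++ [b₄] ++ List.replicate k₃ a ++ x₅ ++ [b₁] ++ List.replicate k₁ a =
      (x₄ ++ [b₄] ++ List.replicate k₃ a ++ x₅) ++ List.replicate 1 b₁ ++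
        List.replicate k₁ a by simp]
    exact List.getElem?_append_replicate_append _ _ _ (by simp; omega) (by simp; omega)
  refine suffT_eq_of_mismatch (by omega) (by omega) (fun j hj => ?_) ?_
  · rw [htail j hj, hblock _ (by omega) (by omega)]
  · rw [hb, hblock _ (by omega) (by omega)]
    exact fun h => hb₁ (Option.some.inj h).symm

/-- Let `x = x₄ b₄ a^{k₃} x₅ b₁ a^{k₁}` with `b₁ ≠ a`, `b₄ ≠ a`,
`k₁, k₃ ≥ 1`, `k₃ ≥ k₁`. Let `ℓ₃ = |x₄ b₄|`, `r₃ = |x₄ b₄ a^{k₃}| - 1` and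
`e = ℓ₃ + k₁ - 1`. Then for every position `i` with `e < i ≤ r₃`, `suff[i] = k₁`. -/
theorem statement5 {α : Type*} [DecidableEq α] (x₄ x₅ : List α) (a b₁ b₄ : α) (k₁ k₃ : ℕ)
    (hb₁ : b₁ ≠ a) (hb₄ : b₄ ≠ a) (hk₁ : 1 ≤ k₁) (hk₃ : 1 ≤ k₃) (hkk : k₃ ≥ k₁)
    (x : List α)
    (hx : x = x₄ ++ [b₄] ++ List.replicate k₃ a ++ x₅ ++ [b₁] ++ List.replicate k₁ a)
    (i : ℕ) (he : (x₄.length + 1) + k₁ - 1 < i) (hr : i ≤ (x₄.length + 1) + k₃ - 1) :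
    suffT x i = k₁ :=
  statement5_general x₄ x₅ a b₁ b₄ k₁ k₃ hb₁ x hx i he hr
end

section
/- Let x = x₄ b₄ a^{k₃} x₅ b₁ a^{k₁} be a string of length m, where x₄, x₅ ∈ Σ*, a, b₁, b₄ ∈ Σ with b₁ ≠ a and b₄ ≠ a, and k₁, k₃ ≥ 1 are integers with k₃ > k₁. Let r₃ = |x₄ b₄ a^{k₃}| - 1. Then good-suff[m-1-suff[r₃]] ≤ m-1-r₃. -/
/-! At position `m - 1 - suff[r]` with shift `m - 1 - r`, the suffix condition holds by the
definition of `suff[r]`, and the occurrence condition compares exactly the two letters that keep the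
common suffix from growing; they differ unless that suffix is all of `x[0..r]`. In the theorem this
is excluded because `x[0..r₃]` ends in `a^{k₁+1}` while `x` ends in `b₁ a^{k₁}`. -/

theorem List.head_eq_of_cons_suffix_of_cons_suffix {α : Type*} {c d : α} {w l : List α}
    (hc : c :: w <:+ l) (hd : d :: w <:+ l) : c = d :=
  (List.cons.inj ((List.suffix_of_suffix_length_le hc hd (by simp)).eq_of_length (by simp))).1

section suffT

variable {α : Type*} [DecidableEq α] (x : List α) {r : ℕ}

theorem suffT_le_succ (r : ℕ) : suffT x r ≤ r + 1 :=
  Nat.findGreatest_le _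

theorem drop_take_suffT :
    (x.take (r + 1)).drop (r + 1 - suffT x r) = x.drop (x.length - suffT x r) :=
  Nat.findGreatest_spec (P := fun k => (x.take (r + 1)).drop (r + 1 - k) = x.drop (x.length - k))
    (Nat.zero_le _) (by simp)

theorem suffT_le_of_not_take_suffix (h : ¬ x.take (r + 1) <:+ x) : suffT x r ≤ r := by
  by_contra hlt
  have hspec := drop_take_suffT x (r := r)
  rw [show suffT x r = r + 1 by have := suffT_le_succ x r; omega, Nat.sub_self, List.drop_zero]
    at hspec
  exact h (hspec ▸ List.drop_suffix _ _)

theorem getElem?_sub_suffT_ne (hs : suffT x r ≤ r) (hr : r < x.length) :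
    x[r - suffT x r]? ≠ x[x.length - 1 - suffT x r]? := by
  have hspec := drop_take_suffT x (r := r)
  set s := suffT x r
  have hmax := Nat.findGreatest_is_greatest (Nat.lt_succ_self s) (by omega : s + 1 ≤ r + 1)
  intro heq
  apply hmax
  show (x.take (r + 1)).drop (r + 1 - (s + 1)) = x.drop (x.length - (s + 1))
  refine List.ext_getElem? fun i => ?_
  rcases i with _ | j
  · simp only [List.getElem?_drop, List.getElem?_take]
    rw [if_pos (by omega), show r + 1 - (s + 1) + 0 = r - s by omega,
      show x.length - (s + 1) + 0 = x.length - 1 - s by omega]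
    exact heq
  · have := congrArg (·[j]?) hspec
    simp only [List.getElem?_drop, List.getElem?_take] at this ⊢
    rwa [show r + 1 - (s + 1) + (j + 1) = r + 1 - s + j by omega,
      show x.length - (s + 1) + (j + 1) = x.length - s + j by omega]

theorem condSuf_suffT (hr : r + 1 < x.length) :
    CondSuf x (x.length - 1 - suffT x r) (x.length - 1 - r) := by
  have hs := suffT_le_succ x r
  refine Or.inl ⟨by omega, by omega, ?_⟩
  rw [show x.length - 1 - suffT x r + 1 - (x.length - 1 - r) = r + 1 - suffT x r by omega,
    show x.length - 1 - (x.length - 1 - suffT x r) = r + 1 - (r + 1 - suffT x r) by omega,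
    ← List.drop_take, drop_take_suffT]
  exact List.drop_suffix _ _

theorem condOcc_suffT (hs : suffT x r ≤ r) (hr : r + 1 < x.length) :
    CondOcc x (x.length - 1 - suffT x r) (x.length - 1 - r) := by
  refine Or.inl ⟨by omega, by omega, ?_⟩
  rw [show x.length - 1 - suffT x r - (x.length - 1 - r) = r - suffT x r by omega]
  exact getElem?_sub_suffT_ne x hs (by omega)

theorem goodSuff_le_of_suffT_le (hs : suffT x r ≤ r) (hr : r + 1 < x.length) :
    goodSuff x (x.length - 1 - suffT x r) ≤ x.length - 1 - r :=
  Nat.sInf_le ⟨condSuf_suffT x hr, condOcc_suffT x hs hr⟩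

end suffT

theorem statement8_general {α : Type*} [DecidableEq α] (x₄ x₅ : List α) (a b₁ b₄ : α) (k₁ k₃ : ℕ)
    (hb₁ : b₁ ≠ a) (hkk : k₃ > k₁)
    (x : List α)
    (hx : x = x₄ ++ [b₄] ++ List.replicate k₃ a ++ x₅ ++ [b₁] ++ List.replicate k₁ a) :
    goodSuff x (x.length - 1 - suffT x ((x₄.length + 1) + k₃ - 1)) ≤
      x.length - 1 - ((x₄.length + 1) + k₃ - 1) := by
  have hlen : x₄.length + 1 + k₃ - 1 + 1 < x.length := by
    subst hx
    simp only [List.length_append, List.length_replicate, List.length_singleton]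
    omega
  refine goodSuff_le_of_suffT_le x (suffT_le_of_not_take_suffix x ?_) hlen
  have htake : x.take (x₄.length + 1 + k₃ - 1 + 1) =
      (x₄ ++ [b₄] ++ List.replicate (k₃ - k₁ - 1) a) ++ a :: List.replicate k₁ a := by
    have hsplit :
        x = (x₄ ++ [b₄] ++ List.replicate k₃ a) ++ (x₅ ++ [b₁] ++ List.replicate k₁ a) := by
      simp [hx]
    have hrep :
        List.replicate k₃ a = List.replicate (k₃ - k₁ - 1) a ++ a :: List.replicate k₁ a := by
      rw [← List.replicate_succ, ← List.replicate_add, Nat.sub_sub, Nat.sub_add_cancel hkk]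
    rw [hsplit, List.take_left' (by simp; omega), hrep, List.append_assoc _ _ (a :: _)]
  rw [htake]
  intro hsuf
  refine hb₁ (List.head_eq_of_cons_suffix_of_cons_suffix ?_ ((List.suffix_append _ _).trans hsuf))
  exact ⟨x₄ ++ [b₄] ++ List.replicate k₃ a ++ x₅, by simp [hx]⟩

/-- Let `x = x₄ b₄ a^{k₃} x₅ b₁ a^{k₁}` with `b₁ ≠ a`, `b₄ ≠ a`,
`k₁, k₃ ≥ 1`, `k₃ > k₁`. Let `r₃ = |x₄ b₄ a^{k₃}| - 1`.
Then `good-suff[m-1-suff[r₃]] ≤ m-1-r₃`. -/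
theorem statement8 {α : Type*} [DecidableEq α] (x₄ x₅ : List α) (a b₁ b₄ : α) (k₁ k₃ : ℕ)
    (hb₁ : b₁ ≠ a) (hb₄ : b₄ ≠ a) (hk₁ : 1 ≤ k₁) (hk₃ : 1 ≤ k₃) (hkk : k₃ > k₁)
    (x : List α)
    (hx : x = x₄ ++ [b₄] ++ List.replicate k₃ a ++ x₅ ++ [b₁] ++ List.replicate k₁ a) :
    goodSuff x (x.length - 1 - suffT x ((x₄.length + 1) + k₃ - 1)) ≤
      x.length - 1 - ((x₄.length + 1) + k₃ - 1) :=
  statement8_general x₄ x₅ a b₁ b₄ k₁ k₃ hb₁ hkk x hx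
end

section
/- Let x = x₄ b₄ a^{k₃} x₅ b₁ a^{k₁} be a string of length m, where x₄, x₅ ∈ Σ*, a, b₁, b₄ ∈ Σ with b₁ ≠ a and b₄ ≠ a, and k₁, k₃ ≥ 1 are integers with k₃ ≥ k₁. Let ℓ₃ = |x₄ b₄| and e = ℓ₃ + k₁ - 1. Then good-suff[m-1-suff[e]] ≤ m-1-e. -/
lemma key {α : Type*} [DecidableEq α] (x : List α) (e : ℕ) (he : e + 2 ≤ x.length) :
    goodSuff x (x.length - 1 - suffT x e) ≤ x.length - 1 - e := by
  set m := x.length with hm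
  set P : ℕ → Prop := fun k => (x.take (e + 1)).drop (e + 1 - k) = x.drop (m - k) with hPdef
  have hP0 : P 0 := by simp [hPdef, hm]
  set s := suffT x e with hs
  have hs1 : s ≤ e + 1 := Nat.findGreatest_le _
  have hPs : P s := Nat.findGreatest_spec (Nat.zero_le _) hP0
  have hseg : (x.drop (e + 1 - s)).take s = x.drop (m - s) := by
    have := hPs
    simp only [hPdef] at this
    rw [List.drop_take] at this
    have hc : e + 1 - (e + 1 - s) = s := by omega
    rwa [hc] at this
  set i := m - 1 - s with hi
  set d := m - 1 - e with hd
  have hmem : d ∈ {d | CondSuf x i d ∧ CondOcc x i d} := by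
    constructor
    · -- CondSuf
      left
      refine ⟨by omega, by omega, ?_⟩
      have h1 : i + 1 - d = e + 1 - s := by omega
      have h2 : m - 1 - i = s := by omega
      rw [h1, h2, hseg]
      exact List.drop_suffix _ _
    · -- CondOcc
      rcases Nat.lt_or_ge s (e + 1) with hse | hse
      · left
        refine ⟨by omega, by omega, ?_⟩
        have hnot : ¬ P (s + 1) :=
          Nat.findGreatest_is_greatest (Nat.lt_succ_self s) (by omega)
        intro heq
        apply hnot
        have hid : i - d = e - s := by omega
        have hes : e - s < m := by omega
        have hms : m - s - 1 < m := by omega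
        rw [hid] at heq
        have hi1 : i = m - 1 - s := rfl
        have hgs : x[e - s]'hes = x[m - s - 1]'hms := by
          have h3 : i = m - s - 1 := by omega
          rw [h3] at heq
          rw [x.getElem?_eq_getElem hes, x.getElem?_eq_getElem hms] at heq
          exact Option.some.inj heq
        show (x.take (e + 1)).drop (e + 1 - (s + 1)) = x.drop (m - (s + 1))
        have h4 : e + 1 - (s + 1) = e - s := by omega
        have h5 : m - (s + 1) = m - s - 1 := by omega
        rw [h4, h5, List.drop_take]
        have h6 : e + 1 - (e - s) = s + 1 := by omega
        rw [h6]
        rw [List.drop_eq_getElem_cons hes, List.drop_eq_getElem_cons hms]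
        rw [List.take_succ_cons, hgs]
        congr 1
        have h7 : e - s + 1 = e + 1 - s := by omega
        have h8 : m - s - 1 + 1 = m - s := by omega
        rw [h7, h8, ← hseg]
      · right
        omega
  calc goodSuff x i ≤ d := Nat.sInf_le hmem
    _ = m - 1 - e := rfl

/-- Let `x = x₄ b₄ a^{k₃} x₅ b₁ a^{k₁}` with `b₁ ≠ a`, `b₄ ≠ a`,
`k₁, k₃ ≥ 1`, `k₃ ≥ k₁`. Let `ℓ₃ = |x₄ b₄|` and `e = ℓ₃ + k₁ - 1`.
Then `good-suff[m-1-suff[e]] ≤ m-1-e`. -/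
theorem statement9 {α : Type*} [DecidableEq α] (x₄ x₅ : List α) (a b₁ b₄ : α) (k₁ k₃ : ℕ)
    (hb₁ : b₁ ≠ a) (hb₄ : b₄ ≠ a) (hk₁ : 1 ≤ k₁) (hk₃ : 1 ≤ k₃) (hkk : k₃ ≥ k₁)
    (x : List α)
    (hx : x = x₄ ++ [b₄] ++ List.replicate k₃ a ++ x₅ ++ [b₁] ++ List.replicate k₁ a) :
    goodSuff x (x.length - 1 - suffT x ((x₄.length + 1) + k₁ - 1)) ≤
      x.length - 1 - ((x₄.length + 1) + k₁ - 1) := by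
  apply key
  subst hx
  simp [List.length_append]
  omega
end

section
/- Let x = x₄ b₄ a^{k₃} x₅ b₁ a^{k₁} be a string of length m, where x₄, x₅ ∈ Σ*, a, b₁, b₄ ∈ Σ with b₁ ≠ a and b₄ ≠ a, and k₁, k₃ ≥ 1 are integers with k₃ ≥ k₁. Let ℓ₃ = |x₄ b₄|, r₃ = |x₄ b₄ a^{k₃}| - 1 and e = ℓ₃ + k₁ - 1. Then good-suff[m-1-suff[i]] < m-1-i for every position i with e < i < r₃ and for every position i with ℓ₃ ≤ i < e. -/
private lemma take_of_eq' {α : Type*} {x u v : List α} {n : ℕ} (h : x = u ++ v)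
    (hn : u.length = n) : x.take n = u := by subst h; exact List.take_left' hn

private lemma drop_of_eq' {α : Type*} {x u v : List α} {n : ℕ} (h : x = u ++ v)
    (hn : u.length = n) : x.drop n = v := by subst h; exact List.drop_left' hn

private lemma get_of_eq' {α : Type*} {x u v : List α} {c : α} {n : ℕ} (h : x = u ++ c :: v)
    (hn : u.length = n) : x[n]? = some c := by
  subst h; subst hn; rw [List.getElem?_append_right le_rfl]; simp

private lemma goodSuff_lt' {α : Type*} {x : List α} {j d B : ℕ} (h1 : CondSuf x j d)
    (h2 : CondOcc x j d) (h3 : d < B) : goodSuff x j < B :=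
  lt_of_le_of_lt (Nat.sInf_le ⟨h1, h2⟩) h3

/-- Let `x = x₄ b₄ a^{k₃} x₅ b₁ a^{k₁}` with `b₁ ≠ a`, `b₄ ≠ a`,
`k₁, k₃ ≥ 1`, `k₃ ≥ k₁`. Let `ℓ₃ = |x₄ b₄|`, `r₃ = |x₄ b₄ a^{k₃}| - 1` and
`e = ℓ₃ + k₁ - 1`. Then `good-suff[m-1-suff[i]] < m-1-i` for every position `i`
with `e < i < r₃` and for every position `i` with `ℓ₃ ≤ i < e`. -/
theorem statement10 {α : Type*} [DecidableEq α] (x₄ x₅ : List α) (a b₁ b₄ : α) (k₁ k₃ : ℕ)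
    (hb₁ : b₁ ≠ a) (hb₄ : b₄ ≠ a) (hk₁ : 1 ≤ k₁) (hk₃ : 1 ≤ k₃) (hkk : k₃ ≥ k₁)
    (x : List α)
    (hx : x = x₄ ++ [b₄] ++ List.replicate k₃ a ++ x₅ ++ [b₁] ++ List.replicate k₁ a)
    (i : ℕ)
    (hi : ((x₄.length + 1) + k₁ - 1 < i ∧ i < (x₄.length + 1) + k₃ - 1) ∨
          (x₄.length + 1 ≤ i ∧ i < (x₄.length + 1) + k₁ - 1)) :
    goodSuff x (x.length - 1 - suffT x i) < x.length - 1 - i := by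
  have hm : x.length = x₄.length + 1 + k₃ + x₅.length + 1 + k₁ := by
    subst hx; simp [List.length_append]; omega
  rcases hi with ⟨h1, h2⟩ | ⟨h1, h2⟩
  · -- case e < i < r₃
    obtain ⟨v, w, rfl, rfl⟩ :
        ∃ v w, i = x₄.length + (k₁ + (1 + v)) ∧ k₃ = (k₁ + (1 + v)) + (1 + w) :=
      ⟨i - x₄.length - k₁ - 1, k₃ - (i - x₄.length) - 1, by omega, by omega⟩
    have hrepA : List.replicate ((k₁+(1+v))+(1+w)) a
        = List.replicate (k₁+(1+v)) a ++ List.replicate (1+w) a := List.replicate_add _ _ _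
    have hsplitA : x = (x₄ ++ [b₄] ++ List.replicate (k₁+(1+v)) a) ++
        (List.replicate (1+w) a ++ x₅ ++ [b₁] ++ List.replicate k₁ a) := by
      rw [hx, hrepA]; simp only [List.append_assoc, List.cons_append, List.singleton_append, List.nil_append, List.append_nil]
    have hrepB : List.replicate (k₁+(1+v)) a
        = List.replicate (1+v) a ++ List.replicate k₁ a := by
      rw [show k₁+(1+v) = (1+v)+k₁ from by omega, List.replicate_add]
    have hsplit2 : x₄ ++ [b₄] ++ List.replicate (k₁+(1+v)) a
        = (x₄ ++ [b₄] ++ List.replicate (1+v) a) ++ List.replicate k₁ a := by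
      rw [hrepB]; simp only [List.append_assoc, List.cons_append, List.singleton_append, List.nil_append, List.append_nil]
    have hsplitD1 : x = (x₄ ++ [b₄] ++ List.replicate ((k₁+(1+v))+(1+w)) a ++ x₅ ++ [b₁]) ++
        List.replicate k₁ a := by rw [hx]
    have hsplitB1 : x = (x₄ ++ [b₄] ++ List.replicate ((k₁+(1+v))+(1+w)) a ++ x₅) ++
        b₁ :: List.replicate k₁ a := by rw [hx]; simp only [List.append_assoc, List.cons_append, List.singleton_append, List.nil_append, List.append_nil]
    have hrepC : List.replicate ((k₁+(1+v))+(1+w)) a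
        = List.replicate v a ++ a :: List.replicate (k₁+(1+w)) a := by
      rw [show (k₁+(1+v))+(1+w) = v + ((k₁+(1+w))+1) from by omega, List.replicate_add,
        List.replicate_succ]
    have hsplitG : x = (x₄ ++ [b₄] ++ List.replicate v a) ++
        a :: (List.replicate (k₁+(1+w)) a ++ x₅ ++ [b₁] ++ List.replicate k₁ a) := by
      rw [hx, hrepC]; simp only [List.append_assoc, List.cons_append, List.singleton_append, List.nil_append, List.append_nil]
    have hrepD : List.replicate ((k₁+(1+v))+(1+w)) a
        = List.replicate (1+v+(1+w)) a ++ List.replicate k₁ a := by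
      rw [show (k₁+(1+v))+(1+w) = (1+v+(1+w))+k₁ from by omega, List.replicate_add]
    have hsplitH : x = (x₄ ++ [b₄] ++ List.replicate (1+v+(1+w)) a) ++
        (List.replicate k₁ a ++ x₅ ++ [b₁] ++ List.replicate k₁ a) := by
      rw [hx, hrepD]; simp only [List.append_assoc, List.cons_append, List.singleton_append, List.nil_append, List.append_nil]
    have hrepE : List.replicate ((k₁+(1+v))+(1+w)) a
        = List.replicate (1+v+w) a ++ a :: List.replicate k₁ a := by
      rw [show (k₁+(1+v))+(1+w) = (1+v+w) + (k₁+1) from by omega, List.replicate_add,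
        List.replicate_succ]
    have hsplitI : x = (x₄ ++ [b₄] ++ List.replicate (1+v+w) a) ++
        a :: (List.replicate k₁ a ++ x₅ ++ [b₁] ++ List.replicate k₁ a) := by
      rw [hx, hrepE]; simp only [List.append_assoc, List.cons_append, List.singleton_append, List.nil_append, List.append_nil]
    have hsuff : suffT x (x₄.length + (k₁ + (1 + v))) = k₁ := by
      rw [suffT, Nat.findGreatest_eq_iff]
      refine ⟨by omega, fun _ => ?_, fun n hn1 hn2 hP => ?_⟩
      · show (x.take (x₄.length + (k₁+(1+v)) + 1)).drop (x₄.length + (k₁+(1+v)) + 1 - k₁)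
            = x.drop (x.length - k₁)
        rw [take_of_eq' (n := x₄.length + (k₁+(1+v)) + 1) hsplitA (by simp only [List.length_append, List.length_replicate, List.length_cons, List.length_nil]; try omega),
          drop_of_eq' (n := x₄.length + (k₁+(1+v)) + 1 - k₁) hsplit2 (by simp only [List.length_append, List.length_replicate, List.length_cons, List.length_nil]; try omega),
          drop_of_eq' (n := x.length - k₁) hsplitD1 (by simp only [List.length_append, List.length_replicate, List.length_cons, List.length_nil]; try omega)]
      · have hP' : (x.take (x₄.length + (k₁+(1+v)) + 1)).drop (x₄.length + (k₁+(1+v)) + 1 - n)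
            = x.drop (x.length - n) := hP
        have h2' := congrArg (fun l => l[n - k₁ - 1]?) hP'
        simp only [List.getElem?_drop, List.getElem?_take] at h2'
        rw [show x₄.length + (k₁+(1+v)) + 1 - n + (n - k₁ - 1) = x₄.length + 1 + v from by omega,
            show x.length - n + (n - k₁ - 1) = x.length - k₁ - 1 from by omega,
            if_pos (by omega)] at h2'
        rw [get_of_eq' (n := x₄.length + 1 + v) hsplitG (by simp only [List.length_append, List.length_replicate, List.length_cons, List.length_nil]; try omega),
            get_of_eq' (n := x.length - k₁ - 1) hsplitB1 (by simp only [List.length_append, List.length_replicate, List.length_cons, List.length_nil]; try omega)] at h2'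
        exact hb₁ (Option.some.inj h2').symm
    rw [hsuff]
    refine goodSuff_lt' (d := x₅.length + 1 + k₁) (Or.inl ⟨by omega, by omega, ?_⟩)
      (Or.inl ⟨by omega, by omega, ?_⟩) (by omega)
    · rw [show x.length - 1 - k₁ + 1 - (x₅.length + 1 + k₁) = x₄.length + 1 + (1+v+(1+w))
          from by omega,
        show x.length - 1 - (x.length - 1 - k₁) = k₁ from by omega,
        drop_of_eq' (n := x₄.length + 1 + (1+v+(1+w))) hsplitH (by simp only [List.length_append, List.length_replicate, List.length_cons, List.length_nil]; try omega),
        take_of_eq' (n := k₁) (show (List.replicate k₁ a ++ x₅ ++ [b₁] ++ List.replicate k₁ a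
            : List α) = List.replicate k₁ a ++ (x₅ ++ [b₁] ++ List.replicate k₁ a)
          from by simp only [List.append_assoc, List.cons_append, List.singleton_append, List.nil_append, List.append_nil]) (by simp)]
      exact ⟨_, hsplitD1.symm⟩
    · rw [show x.length - 1 - k₁ - (x₅.length + 1 + k₁) = x₄.length + 1 + (1+v+w) from by omega,
        show x.length - 1 - k₁ = x₄.length + 1 + ((k₁+(1+v))+(1+w)) + x₅.length from by omega,
        get_of_eq' (n := x₄.length + 1 + (1+v+w)) hsplitI (by simp only [List.length_append, List.length_replicate, List.length_cons, List.length_nil]; try omega),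
        get_of_eq' (n := x₄.length + 1 + ((k₁+(1+v))+(1+w)) + x₅.length) hsplitB1 (by simp only [List.length_append, List.length_replicate, List.length_cons, List.length_nil]; try omega)]
      exact fun h => hb₁ (Option.some.inj h).symm
  · -- case ℓ₃ ≤ i < e
    obtain ⟨s, c, hs1, rfl, rfl⟩ :
        ∃ s c, 1 ≤ s ∧ k₁ = c + (1 + s) ∧ i = x₄.length + s :=
      ⟨i - x₄.length, k₁ - (i - x₄.length) - 1, by omega, by omega, by omega⟩
    obtain ⟨u, rfl⟩ : ∃ u, k₃ = s + u := ⟨k₃ - s, by omega⟩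
    have hrep1 : List.replicate (s+u) a = List.replicate s a ++ List.replicate u a :=
      List.replicate_add _ _ _
    have hsplitA : x = (x₄ ++ [b₄] ++ List.replicate s a) ++
        (List.replicate u a ++ x₅ ++ [b₁] ++ List.replicate (c+(1+s)) a) := by
      rw [hx, hrep1]; simp only [List.append_assoc, List.cons_append, List.singleton_append, List.nil_append, List.append_nil]
    have hsplitB : x = (x₄ ++ [b₄] ++ List.replicate (s+u) a ++ x₅) ++
        b₁ :: List.replicate (c+(1+s)) a := by rw [hx]; simp only [List.append_assoc, List.cons_append, List.singleton_append, List.nil_append, List.append_nil]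
    have hrep2 : List.replicate (c+(1+s)) a = List.replicate c a ++ a :: List.replicate s a := by
      rw [show c+(1+s) = c+(s+1) from by omega, List.replicate_add, List.replicate_succ]
    have hsplitC : x = (x₄ ++ [b₄] ++ List.replicate (s+u) a ++ x₅ ++ [b₁] ++
        List.replicate c a) ++ a :: List.replicate s a := by
      rw [hx, hrep2]; simp only [List.append_assoc, List.cons_append, List.singleton_append, List.nil_append, List.append_nil]
    have hsplitC' : x = (x₄ ++ [b₄] ++ List.replicate (s+u) a ++ x₅ ++ [b₁] ++
        List.replicate c a ++ [a]) ++ List.replicate s a := by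
      rw [hsplitC]; simp only [List.append_assoc, List.cons_append, List.singleton_append, List.nil_append, List.append_nil]
    have hrep3 : List.replicate (c+(1+s)) a
        = List.replicate (c+1) a ++ List.replicate s a := by
      rw [show c+(1+s) = (c+1)+s from by omega, List.replicate_add]
    have hsplitD : x = (x₄ ++ [b₄] ++ List.replicate (s+u) a ++ x₅ ++ [b₁]) ++
        List.replicate (c+(1+s)) a := by rw [hx]
    have hsplitF : x = x₄ ++ b₄ ::
        (List.replicate (s+u) a ++ x₅ ++ [b₁] ++ List.replicate (c+(1+s)) a) := by
      rw [hx]; simp only [List.append_assoc, List.cons_append, List.singleton_append, List.nil_append, List.append_nil]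
    have hsuff : suffT x (x₄.length + s) = s := by
      rw [suffT, Nat.findGreatest_eq_iff]
      refine ⟨by omega, fun _ => ?_, fun n hn1 hn2 hP => ?_⟩
      · show (x.take (x₄.length + s + 1)).drop (x₄.length + s + 1 - s) = x.drop (x.length - s)
        rw [take_of_eq' (n := x₄.length + s + 1) hsplitA (by simp only [List.length_append, List.length_replicate, List.length_cons, List.length_nil]; try omega),
          drop_of_eq' (n := x₄.length + s + 1 - s)
            (show x₄ ++ [b₄] ++ List.replicate s a = (x₄ ++ [b₄]) ++ List.replicate s a
              from by simp only [List.append_assoc, List.cons_append, List.singleton_append, List.nil_append, List.append_nil]) (by simp only [List.length_append, List.length_replicate, List.length_cons, List.length_nil]; try omega),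
          drop_of_eq' (n := x.length - s) (show x = (x₄ ++ [b₄] ++ List.replicate (s+u) a ++ x₅
              ++ [b₁] ++ List.replicate (c+1) a) ++ List.replicate s a
            from by rw [hx, hrep3]; simp only [List.append_assoc, List.cons_append, List.singleton_append, List.nil_append, List.append_nil]) (by simp only [List.length_append, List.length_replicate, List.length_cons, List.length_nil]; try omega)]
      · have hP' : (x.take (x₄.length + s + 1)).drop (x₄.length + s + 1 - n)
            = x.drop (x.length - n) := hP
        have h2' := congrArg (fun l => l[n - s - 1]?) hP'
        simp only [List.getElem?_drop, List.getElem?_take] at h2'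
        rw [show x₄.length + s + 1 - n + (n - s - 1) = x₄.length from by omega,
            show x.length - n + (n - s - 1) = x.length - s - 1 from by omega,
            if_pos (by omega)] at h2'
        rw [get_of_eq' (n := x₄.length) hsplitF rfl,
            get_of_eq' (n := x.length - s - 1) hsplitC (by simp only [List.length_append, List.length_replicate, List.length_cons, List.length_nil]; try omega)] at h2'
        exact hb₄ (Option.some.inj h2')
    rw [hsuff]
    refine goodSuff_lt' (d := c + 1) (Or.inl ⟨by omega, by omega, ?_⟩)
      (Or.inl ⟨by omega, by omega, ?_⟩) (by omega)
    · rw [show x.length - 1 - s + 1 - (c+1) = x.length - (c+(1+s)) from by omega,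
        show x.length - 1 - (x.length - 1 - s) = s from by omega,
        drop_of_eq' (n := x.length - (c+(1+s))) hsplitD (by simp only [List.length_append, List.length_replicate, List.length_cons, List.length_nil]; try omega), List.take_replicate,
        show s ⊓ (c+(1+s)) = s from by omega]
      exact ⟨_, hsplitC'.symm⟩
    · rw [show x.length - 1 - s - (c+1) = x.length - 1 - (c+(1+s)) from by omega,
        get_of_eq' (n := x.length - 1 - (c+(1+s))) hsplitB (by simp only [List.length_append, List.length_replicate, List.length_cons, List.length_nil]; try omega),
        get_of_eq' (n := x.length - 1 - s) hsplitC (by simp only [List.length_append, List.length_replicate, List.length_cons, List.length_nil]; try omega)]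
      exact fun h => hb₁ (Option.some.inj h)
end

section
/- Let x be a string of length m and let i be a position with 0 ≤ i ≤ m-1. If there exists a position j with 0 ≤ j ≤ m-2 such that m-1-suff[j] = i (i.e., the suffix z = x[i+1..m-1] reoccurs in x preceded by a mismatching letter), then good-suff[i] = min{ m-1-j | 0 ≤ j ≤ m-2 and m-1-suff[j] = i }. -/
section Aux

variable {α : Type*} [DecidableEq α]

/-- Rewrite the `suffT` predicate as a "segment" statement. -/
lemma P_eq_seg (x : List α) {j k : ℕ} (hk : k ≤ j + 1) :
    (x.take (j + 1)).drop (j + 1 - k) = (x.drop (j + 1 - k)).take k := by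
  rw [List.drop_take, Nat.sub_sub_self hk]

/-- a suffix of `x` equals the appropriate `drop`. -/
lemma eq_drop_of_suffix {x t : List α} (h : t <:+ x) :
    t = x.drop (x.length - t.length) := by
  obtain ⟨o, rfl⟩ := h; simp

/-- shifting a segment by a period `d`. -/
lemma seg_shift {x : List α} {a k d : ℕ} (hper : x.take (x.length - d) = x.drop d)
    (h : a + k ≤ x.length - d) :
    (x.drop (a + d)).take k = (x.drop a).take k := by
  have h1 : (x.take (x.length - d)).drop a = (x.drop a).take (x.length - d - a) :=
    List.drop_take ..
  calc (x.drop (a + d)).take k = ((x.drop d).drop a).take k := by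
        rw [List.drop_drop, Nat.add_comm d a]
    _ = ((x.take (x.length - d)).drop a).take k := by rw [hper]
    _ = ((x.drop a).take (x.length - d - a)).take k := by rw [h1]
    _ = (x.drop a).take k := by
        rw [List.take_take, Nat.min_eq_left (by omega)]

lemma suffT_le (x : List α) (j : ℕ) : suffT x j ≤ j + 1 :=
  Nat.findGreatest_le _

lemma suffT_P (x : List α) (j : ℕ) :
    (x.take (j + 1)).drop (j + 1 - suffT x j) = x.drop (x.length - suffT x j) :=
 by
  have h0 : (fun k => (x.take (j + 1)).drop (j + 1 - k) = x.drop (x.length - k)) 0 := by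
    show (x.take (j + 1)).drop (j + 1 - 0) = x.drop (x.length - 0)
    simp [List.drop_take]
  exact Nat.findGreatest_spec (P := fun k => (x.take (j + 1)).drop (j + 1 - k) = x.drop (x.length - k)) (m := 0) (Nat.zero_le _) h0

lemma suff_ge {x : List α} {j k : ℕ} (hk : k ≤ j + 1)
    (h : (x.take (j + 1)).drop (j + 1 - k) = x.drop (x.length - k)) :
    k ≤ suffT x j :=
  Nat.le_findGreatest hk h

lemma suffT_is_greatest {x : List α} {j k : ℕ} (hk : suffT x j < k) (hkb : k ≤ j + 1) :
    ¬ (x.take (j + 1)).drop (j + 1 - k) = x.drop (x.length - k) :=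
  Nat.findGreatest_is_greatest hk hkb

/-- downward closure of the matching predicate. -/
lemma P_of_P_succ {x : List α} {j k : ℕ} (hj : j + 1 < x.length) (hk : k ≤ j)
    (h : (x.take (j + 1)).drop (j + 1 - (k + 1)) = x.drop (x.length - (k + 1))) :
    (x.take (j + 1)).drop (j + 1 - k) = x.drop (x.length - k) := by
  have h' := congrArg (List.drop 1) h
  rw [List.drop_drop, List.drop_drop] at h'
  have e1 : j + 1 - (k + 1) + 1 = j + 1 - k := by omega
  have e2 : x.length - (k + 1) + 1 = x.length - k := by omega
  rwa [e1, e2] at h'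

lemma P_of_le {x : List α} {j : ℕ} (hj : j + 1 < x.length) :
    ∀ b, b ≤ j + 1 →
      (x.take (j + 1)).drop (j + 1 - b) = x.drop (x.length - b) →
      ∀ a, a ≤ b → (x.take (j + 1)).drop (j + 1 - a) = x.drop (x.length - a) := by
  intro b
  induction b with
  | zero => intro _ hb a ha; interval_cases a; exact hb
  | succ n ih =>
    intro hbn hb a ha
    rcases Nat.eq_or_lt_of_le ha with rfl | hlt
    · exact hb
    · exact ih (by omega) (P_of_P_succ hj (by omega) hb) a (by omega)

lemma suffT_le_of_not {x : List α} {j k : ℕ} (hj : j + 1 < x.length) (hk : k ≤ j)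
    (h : ¬ (x.take (j + 1)).drop (j + 1 - (k + 1)) = x.drop (x.length - (k + 1))) :
    suffT x j ≤ k := by
  by_contra hc
  push_neg at hc
  exact h (P_of_le hj (suffT x j) (suffT_le x j) (suffT_P x j) (k + 1) (by omega))

/-- From the successor matching statement, extract the first-element equality. -/
lemma head_eq_of_P_succ {x : List α} {j L : ℕ} (hj : j + 1 < x.length) (hL : L ≤ j)
    (h : (x.take (j + 1)).drop (j + 1 - (L + 1)) = x.drop (x.length - (L + 1))) :
    x[j - L]? = x[x.length - 1 - L]? := by
  have h0 := congrArg (fun l : List α => l[0]?) h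
  simp only [List.getElem?_drop, List.getElem?_take] at h0
  have e1 : j + 1 - (L + 1) + 0 = j - L := by omega
  have e2 : x.length - (L + 1) + 0 = x.length - 1 - L := by omega
  rw [e1, e2, if_pos (by omega)] at h0
  exact h0

/-- Conversely, build the successor matching statement from the matching statement
plus first-element equality. -/
lemma P_succ_of_head_eq {x : List α} {j L : ℕ} (hj : j + 1 < x.length) (hL : L ≤ j)
    (hP : (x.take (j + 1)).drop (j + 1 - L) = x.drop (x.length - L))
    (hhd : x[j - L]? = x[x.length - 1 - L]?) :
    (x.take (j + 1)).drop (j + 1 - (L + 1)) = x.drop (x.length - (L + 1)) := by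
  have key : ∀ l₁ l₂ : List α, l₁[0]? = l₂[0]? → l₁.drop 1 = l₂.drop 1 → l₁ = l₂ := by
    intro l₁ l₂ h0 h1
    cases l₁ <;> cases l₂ <;> simp_all
  apply key
  · simp only [List.getElem?_drop, List.getElem?_take]
    have e1 : j + 1 - (L + 1) + 0 = j - L := by omega
    have e2 : x.length - (L + 1) + 0 = x.length - 1 - L := by omega
    rw [e1, e2, if_pos (by omega)]
    exact hhd
  · rw [List.drop_drop, List.drop_drop]
    have e1 : j + 1 - (L + 1) + 1 = j + 1 - L := by omega
    have e2 : x.length - (L + 1) + 1 = x.length - L := by omega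
    rw [e1, e2]
    exact hP

/-- membership in the good-suffix set from membership in the reoccurrence set. -/
lemma mem_A_of_mem_B {x : List α} {i j : ℕ} (hi : i < x.length) (hj : j + 1 < x.length)
    (hs : x.length - 1 - suffT x j = i) :
    CondSuf x i (x.length - 1 - j) ∧ CondOcc x i (x.length - 1 - j) := by
  set m := x.length with hm
  have hsle : suffT x j ≤ j + 1 := suffT_le x j
  have hsL : suffT x j = m - 1 - i := by omega
  set L : ℕ := m - 1 - i with hL
  set d : ℕ := m - 1 - j with hd
  have hd1 : 0 < d := by omega
  have hd2 : d ≤ i + 1 := by omega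
  have hP := suffT_P x j
  rw [hsL] at hP
  rw [P_eq_seg x (by omega)] at hP
  constructor
  · left
    refine ⟨hd1, hd2, ?_⟩
    have e1 : i + 1 - d = j + 1 - L := by omega
    rw [e1, hP]
    exact List.drop_suffix _ x
  · rcases Nat.lt_or_ge i d with h | h
    · exact Or.inr h
    · left
      refine ⟨hd1, by omega, ?_⟩
      intro heq
      have hLj : L ≤ j := by omega
      have e1 : i - d = j - L := by omega
      have e2 : i = m - 1 - L := by omega
      rw [e1, e2] at heq
      have hP' : (x.take (j + 1)).drop (j + 1 - L) = x.drop (m - L) := by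
        rw [P_eq_seg x (by omega)]; exact hP
      have := suff_ge (x := x) (j := j) (k := L + 1) (by omega)
        (P_succ_of_head_eq hj hLj hP' heq)
      omega

/-- if `d` is in the good-suffix set via the first disjunct, it is in the
reoccurrence set. -/
lemma mem_B_of_small {x : List α} {i d : ℕ} (hm2 : 2 ≤ x.length) (hi : i < x.length)
    (hdm : d < x.length) (h1 : 0 < d) (h2 : d ≤ i + 1)
    (hsuf : (x.drop (i + 1 - d)).take (x.length - 1 - i) <:+ x)
    (hocc : CondOcc x i d) :
    ∃ j, j + 1 < x.length ∧ x.length - 1 - suffT x j = i ∧ d = x.length - 1 - j := by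
  obtain ⟨L, hL⟩ : ∃ L, L = x.length - 1 - i := ⟨_, rfl⟩
  obtain ⟨j, hj⟩ : ∃ j, j = x.length - 1 - d := ⟨_, rfl⟩
  rw [← hL] at hsuf
  have hjm : j + 1 < x.length := by omega
  have hLj1 : L ≤ j + 1 := by omega
  refine ⟨j, hjm, ?_, by omega⟩
  -- length of the suffix
  have hlen : ((x.drop (i + 1 - d)).take L).length = L := by
    simp only [List.length_take, List.length_drop]
    omega
  have hdropeq : (x.drop (i + 1 - d)).take L = x.drop (x.length - L) := by
    have h := eq_drop_of_suffix hsuf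
    rw [hlen] at h
    exact h
  have hPL : (x.take (j + 1)).drop (j + 1 - L) = x.drop (x.length - L) := by
    rw [P_eq_seg x hLj1]
    have e1 : j + 1 - L = i + 1 - d := by omega
    rw [e1]
    exact hdropeq
  have hge : L ≤ suffT x j := suff_ge hLj1 hPL
  have hle : suffT x j ≤ L := by
    rcases hocc with ⟨_, hdi, hne⟩ | hlt
    · -- d ≤ i, mismatch
      apply suffT_le_of_not hjm (by omega)
      intro hPs
      have hhd := head_eq_of_P_succ hjm (by omega) hPs
      have e1 : j - L = i - d := by omega
      have e2 : x.length - 1 - L = i := by omega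
      rw [e1, e2] at hhd
      exact hne hhd
    · -- i < d, so d = i + 1 and L = j + 1
      have hE : j + 1 = L := by omega
      rw [← hE]
      exact suffT_le x j
  omega

/-- the periodic shift step. -/
lemma shift_step {x : List α} {i d j : ℕ} (hi : i < x.length) (hd : i + 1 < d)
    (hdm : d < x.length) (hper : x.take (x.length - d) <:+ x)
    (hj : j + 1 < x.length) (hs : x.length - 1 - suffT x j = i)
    (hlt : j < x.length - 1 - d) :
    j + d + 1 < x.length ∧ x.length - 1 - suffT x (j + d) = i := by
  set m := x.length with hm
  have hsle : suffT x j ≤ j + 1 := suffT_le x j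
  have hsL : suffT x j = m - 1 - i := by omega
  set L : ℕ := m - 1 - i with hL
  -- the period identity
  have hperlen : (x.take (m - d)).length = m - d := by
    simp only [List.length_take]; omega
  have hper' : x.take (m - d) = x.drop d := by
    have := eq_drop_of_suffix hper
    rw [hperlen] at this
    have e : m - (m - d) = d := by omega
    rwa [e] at this
  -- exclude the full case: L ≤ j
  have hLj : L ≤ j := by omega
  have hjd : j + d + 1 < m := by omega
  constructor
  · exact hjd
  -- the matching at j, in segment form
  have hP := suffT_P x j
  rw [hsL] at hP
  rw [P_eq_seg x (by omega)] at hP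
  -- lower bound : L ≤ suffT x (j + d)
  have hshift : (x.drop ((j + 1 - L) + d)).take L = (x.drop (j + 1 - L)).take L :=
    seg_shift hper' (by omega)
  have hPnew : (x.take (j + d + 1)).drop (j + d + 1 - L) = x.drop (m - L) := by
    rw [P_eq_seg x (by omega)]
    have e : j + d + 1 - L = (j + 1 - L) + d := by omega
    rw [e, hshift]
    exact hP
  have hge : L ≤ suffT x (j + d) := suff_ge (by omega) hPnew
  -- upper bound
  have hnot : ¬ (x.take (j + 1)).drop (j + 1 - (L + 1)) = x.drop (m - (L + 1)) :=
    suffT_is_greatest (by omega) (by omega)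
  have hle : suffT x (j + d) ≤ L := by
    apply suffT_le_of_not hjd (by omega)
    intro hPs
    apply hnot
    rw [P_eq_seg x (by omega)] at hPs ⊢
    have e1 : j + d + 1 - (L + 1) = (j + 1 - (L + 1)) + d := by omega
    rw [e1] at hPs
    have hshift2 : (x.drop ((j + 1 - (L + 1)) + d)).take (L + 1)
        = (x.drop (j + 1 - (L + 1))).take (L + 1) :=
      seg_shift hper' (by omega)
    rw [hshift2] at hPs
    exact hPs
  omega

/-- iterate the shift step to find a reoccurrence with large index. -/
lemma exists_big {x : List α} {i d : ℕ} (hi : i < x.length) (hd : i + 1 < d)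
    (hdm : d < x.length) (hper : x.take (x.length - d) <:+ x)
    {j0 : ℕ} (hj0 : j0 + 1 < x.length) (hs0 : x.length - 1 - suffT x j0 = i) :
    ∃ j', j' + 1 < x.length ∧ x.length - 1 - suffT x j' = i ∧ x.length - 1 - d ≤ j' := by
  have main : ∀ n j, j + 1 < x.length → x.length - 1 - suffT x j = i →
      x.length - 1 - d ≤ j + n →
      ∃ j', j' + 1 < x.length ∧ x.length - 1 - suffT x j' = i ∧ x.length - 1 - d ≤ j' := by
    intro n
    induction n with
    | zero => intro j h1 h2 h3; exact ⟨j, h1, h2, by omega⟩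
    | succ n ih =>
      intro j h1 h2 h3
      by_cases hc : x.length - 1 - d ≤ j
      · exact ⟨j, h1, h2, hc⟩
      · push_neg at hc
        obtain ⟨hn1, hn2⟩ := shift_step hi hd hdm hper h1 h2 hc
        exact ih (j + d) hn1 hn2 (by omega)
  exact main x.length j0 hj0 hs0 (by omega)

end Aux

/-- If there exists a position `j` with `0 ≤ j ≤ m-2` such that
`m-1-suff[j] = i`, then `good-suff[i] = min{ m-1-j | 0 ≤ j ≤ m-2 and m-1-suff[j] = i }`. -/
theorem statement12 {α : Type*} [DecidableEq α] (x : List α) (i : ℕ) (hi : i < x.length)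
    (hex : ∃ j, j + 1 < x.length ∧ x.length - 1 - suffT x j = i) :
    goodSuff x i =
      sInf {d | ∃ j, j + 1 < x.length ∧ x.length - 1 - suffT x j = i ∧
        d = x.length - 1 - j} := by
  obtain ⟨j0, hj0, hs0⟩ := hex
  set S₂ : Set ℕ := {d | ∃ j, j + 1 < x.length ∧ x.length - 1 - suffT x j = i ∧
    d = x.length - 1 - j} with hS₂
  set S₁ : Set ℕ := {d | CondSuf x i d ∧ CondOcc x i d} with hS₁
  have hBne : S₂.Nonempty := ⟨x.length - 1 - j0, j0, hj0, hs0, rfl⟩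
  have hBA : ∀ d ∈ S₂, d ∈ S₁ := by
    rintro d ⟨j, hj, hs, rfl⟩
    exact mem_A_of_mem_B hi hj hs
  have hAne : S₁.Nonempty := by
    obtain ⟨b, hb⟩ := hBne
    exact ⟨b, hBA b hb⟩
  have h1 : sInf S₁ ≤ sInf S₂ := Nat.sInf_le (hBA _ (Nat.sInf_mem hBne))
  have h2 : sInf S₂ ≤ sInf S₁ := by
    obtain ⟨hsuf, hocc⟩ := Nat.sInf_mem hAne
    have hup : sInf S₁ < x.length := by
      have h3 := Nat.sInf_le (show x.length - 1 - j0 ∈ S₂ from ⟨j0, hj0, hs0, rfl⟩)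
      omega
    rcases hsuf with ⟨ha, hb, hc⟩ | ⟨hd1, hper⟩
    · exact Nat.sInf_le (mem_B_of_small (by omega) hi hup ha hb hc hocc)
    · obtain ⟨j', hj'1, hj'2, hj'3⟩ := exists_big hi hd1 hup hper hj0 hs0
      calc sInf S₂ ≤ x.length - 1 - j' := Nat.sInf_le ⟨j', hj'1, hj'2, rfl⟩
        _ ≤ sInf S₁ := by omega
  have : goodSuff x i = sInf S₁ := rfl
  omega
end

section
/- Let x be a string of length m and let i be a position with 0 ≤ i ≤ m-1 such that there is no position j with 0 ≤ j ≤ m-2 and m-1-suff[j] = i (i.e., the suffix z = x[i+1..m-1] does not reoccur in x preceded by a mismatching letter). Then good-suff[i] ≤ min{ m-1-j | 0 ≤ j ≤ m-2, suff[j] = j+1 and suff[j] < m-1-i }, provided this set is nonempty. -/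
/-- If there is no position `j` with `0 ≤ j ≤ m-2` and `m-1-suff[j] = i`,
then `good-suff[i] ≤ min{ m-1-j | 0 ≤ j ≤ m-2, suff[j] = j+1 and suff[j] < m-1-i }`,
provided this set is nonempty. -/
theorem statement13 {α : Type*} [DecidableEq α] (x : List α) (i : ℕ) (hi : i < x.length)
    (hnex : ¬ ∃ j, j + 1 < x.length ∧ x.length - 1 - suffT x j = i)
    (hne : {d | ∃ j, j + 1 < x.length ∧ suffT x j = j + 1 ∧
      suffT x j < x.length - 1 - i ∧ d = x.length - 1 - j}.Nonempty) :
    goodSuff x i ≤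
      sInf {d | ∃ j, j + 1 < x.length ∧ suffT x j = j + 1 ∧
        suffT x j < x.length - 1 - i ∧ d = x.length - 1 - j} := by
  obtain ⟨j, hj, hsj, hlt, hd⟩ := Nat.sInf_mem hne
  rw [hd]
  apply Nat.sInf_le
  have hP : (x.take (j + 1)).drop (j + 1 - (j + 1)) = x.drop (x.length - (j + 1)) := by
    have h0 : (x.take (j + 1)).drop (j + 1 - 0) = x.drop (x.length - 0) := by
      simp
    have := Nat.findGreatest_spec (P := fun k =>
      (x.take (j + 1)).drop (j + 1 - k) = x.drop (x.length - k)) (n := j + 1)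
      (Nat.zero_le _) h0
    rw [suffT] at hsj
    rw [hsj] at this
    exact this
  simp only [Nat.sub_self, List.drop_zero] at hP
  constructor
  · right
    refine ⟨by omega, ?_⟩
    have : x.length - (x.length - 1 - j) = j + 1 := by omega
    rw [this, hP]
    exact List.drop_suffix _ _
  · right; omega
end

section
/- Let x be a string of length m ≥ 1. Then good-suff[0] is equal to the shortest period of x, i.e., the smallest integer p with 1 ≤ p ≤ m such that x[i] = x[i+p] for every position i with 0 ≤ i < m-p. -/
lemma take_suffix_iff_period {α : Type*} (x : List α) (d : ℕ) (hd : d ≤ x.length) :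
    x.take (x.length - d) <:+ x ↔ ∀ i, i + d < x.length → x[i]? = x[i + d]? := by
  rw [List.suffix_iff_eq_drop, List.length_take]
  have hlen : min (x.length - d) x.length = x.length - d := by omega
  rw [hlen]
  have h2 : x.length - (x.length - d) = d := by omega
  rw [h2]
  constructor
  · intro h i hi
    have := congrArg (fun l => l[i]?) h
    simp only [List.getElem?_take, List.getElem?_drop] at this
    rw [if_pos (by omega)] at this
    rw [this]; congr 1; omega
  · intro h
    apply List.ext_getElem?
    intro i
    rw [List.getElem?_take, List.getElem?_drop]
    by_cases hi : i < x.length - d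
    · rw [if_pos hi, h i (by omega)]; congr 1; omega
    · rw [if_neg hi, eq_comm, List.getElem?_eq_none]; omega

lemma mem_goodSuff_zero_iff {α : Type*} (x : List α) (d : ℕ) :
    (CondSuf x 0 d ∧ CondOcc x 0 d) ↔ (1 ≤ d ∧ x.take (x.length - d) <:+ x) := by
  constructor
  · rintro ⟨hs, _⟩
    rcases hs with ⟨hd, hd1, h⟩ | ⟨hd, h⟩
    · have : d = 1 := by omega
      subst this
      simp only [Nat.sub_self, List.drop_zero] at h
      exact ⟨le_refl 1, by simpa using h⟩
    · exact ⟨by omega, h⟩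
  · rintro ⟨hd, h⟩
    refine ⟨?_, Or.inr hd⟩
    rcases eq_or_lt_of_le hd with h1 | h1
    · left
      refine ⟨by omega, by omega, ?_⟩
      have : d = 1 := h1.symm
      subst this
      simpa using h
    · exact Or.inr ⟨h1, h⟩

/-- For a string `x` of length `m ≥ 1`, `good-suff[0]` equals the
shortest period of `x`, i.e. the smallest `p` with `1 ≤ p ≤ m` such that
`x[i] = x[i+p]` for every `i` with `0 ≤ i < m-p`. -/
theorem statement14 {α : Type*} (x : List α) (hm : 1 ≤ x.length) :
    goodSuff x 0 =
      sInf {p | 1 ≤ p ∧ p ≤ x.length ∧ ∀ i, i + p < x.length → x[i]? = x[i + p]?} := by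
  unfold goodSuff
  have hset : {d | CondSuf x 0 d ∧ CondOcc x 0 d} =
      {d | 1 ≤ d ∧ x.take (x.length - d) <:+ x} := by
    ext d; exact mem_goodSuff_zero_iff x d
  rw [hset]
  set S1 := {d | 1 ≤ d ∧ x.take (x.length - d) <:+ x} with hS1
  set S2 := {p | 1 ≤ p ∧ p ≤ x.length ∧ ∀ i, i + p < x.length → x[i]? = x[i + p]?} with hS2
  have hm1 : x.length ∈ S1 := ⟨hm, by simp⟩
  have hm2 : x.length ∈ S2 := ⟨hm, le_refl _, fun i hi => by omega⟩
  apply le_antisymm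
  · have h2 : sInf S2 ∈ S2 := Nat.sInf_mem ⟨_, hm2⟩
    obtain ⟨hp1, hp2, hp3⟩ := h2
    exact Nat.sInf_le ⟨hp1, (take_suffix_iff_period x _ hp2).2 hp3⟩
  · have h1 : sInf S1 ∈ S1 := Nat.sInf_mem ⟨_, hm1⟩
    have hle : sInf S1 ≤ x.length := Nat.sInf_le hm1
    obtain ⟨hd1, hd2⟩ := h1
    exact Nat.sInf_le ⟨hd1, hle, (take_suffix_iff_period x _ hle).1 hd2⟩
end
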